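/- arXiv:1708.01833 — 2 statements merged into one kernel-verified Lean document; each statement's English description precedes it below -/
import Mathlib

section
/- Suppose the weighted undirected graph a on n nodes is connected. A tuple (X*, Y*, Z*) is an optimal solution of problem (RRR-opt) if and only if there exist Λ¹_i* ∈ ℝ^{r×q} and Λ²_i* ∈ ℝ^{r×q} (i = 1,…,n) such that (X*, Y*, Z*, Λ¹*, Λ²*) is an equilibrium of algorithm (RRR-alg), i.e., all the right-hand sides of (RRR-alg) vanish at this point (with all derivative-feedback terms set to zero). -/
open Matrix

/-- Squared Frobenius norm of a real matrix: `‖M‖_F² = tr (Mᵀ M)`. -/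
noncomputable def frobSq {α β : Type*} [Fintype α] [Fintype β] (M : Matrix α β ℝ) : ℝ :=
  Matrix.trace (Mᵀ * M)

/-- Frobenius inner product of real matrices: `⟨M,N⟩_F = tr (Mᵀ N)`. -/
noncomputable def frobInner {α β : Type*} [Fintype α] [Fintype β] (M N : Matrix α β ℝ) : ℝ :=
  Matrix.trace (Mᵀ * N)

/-- The weighted undirected graph with adjacency matrix `a` is connected: any two nodes are
joined by a path of adjacent nodes (nodes `u ≠ v` are adjacent iff `a u v > 0`). -/
def GraphConnected {n : ℕ} (a : Matrix (Fin n) (Fin n) ℝ) : Prop :=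
  ∀ i j : Fin n, Relation.ReflTransGen (fun u v : Fin n => u ≠ v ∧ 0 < a u v) i j

/-- Assemble a family of row blocks `M i ∈ ℝ^{d i × β}` into one matrix. -/
def blockRows {n : ℕ} {d : Fin n → ℕ} {β : Type*} (M : ∀ i, Matrix (Fin (d i)) β ℝ) :
    Matrix ((i : Fin n) × Fin (d i)) β ℝ :=
  Matrix.of fun s j => M s.1 s.2 j

/-- Assemble a family of column blocks `M i ∈ ℝ^{α × d i}` into one matrix. -/
def blockCols {n : ℕ} {d : Fin n → ℕ} {α : Type*} (M : ∀ i, Matrix α (Fin (d i)) ℝ) :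
    Matrix α ((i : Fin n) × Fin (d i)) ℝ :=
  Matrix.of fun k s => M s.1 k s.2

/-- The `i`-th row block of a matrix whose rows are partitioned according to `d`. -/
def rowBlk {n : ℕ} {d : Fin n → ℕ} {β : Type*}
    (Y : Matrix ((i : Fin n) × Fin (d i)) β ℝ) (i : Fin n) :
    Matrix (Fin (d i)) β ℝ :=
  Matrix.of fun k j => Y ⟨i, k⟩ j

/-- `[M]_R`: the matrix whose `i`-th row block is `M` and whose other row blocks are zero. -/
def embedRow {n : ℕ} {d : Fin n → ℕ} {β : Type*} (i : Fin n)
    (M : Matrix (Fin (d i)) β ℝ) :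
    Matrix ((i' : Fin n) × Fin (d i')) β ℝ :=
  Matrix.of fun s j => if h : s.1 = i then M (Fin.cast (congrArg d h) s.2) j else 0

/-- `[M]_C`: the matrix whose `i`-th column block is `M` and whose other column blocks are zero. -/
def embedCol {n : ℕ} {d : Fin n → ℕ} {α : Type*} (i : Fin n)
    (M : Matrix α (Fin (d i)) ℝ) :
    Matrix α ((i' : Fin n) × Fin (d i')) ℝ :=
  Matrix.of fun k s => if h : s.1 = i then M k (Fin.cast (congrArg d h) s.2) else 0

/-- Feasibility for problem (RRR-opt). -/
def RRRfeas {n r q : ℕ} {pdim : Fin n → ℕ}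
    (a : Matrix (Fin n) (Fin n) ℝ)
    (Bv : ∀ i, Matrix (Fin (pdim i)) (Fin q) ℝ)
    (Xl : ∀ i, Matrix (Fin r) (Fin (pdim i)) ℝ)
    (Y Z : Fin n → Matrix (Fin r) (Fin q) ℝ) : Prop :=
  (∀ i, (n : ℝ)⁻¹ • Y i - Xl i * Bv i + ∑ j, a i j • (Z i - Z j) = 0) ∧
  (∀ i j, Y i = Y j)

/-- Objective of problem (RRR-opt): `Σ_i ‖A_{vi} Y_i − F_{vi}‖_F²`. -/
noncomputable def RRRobj {n r q : ℕ} {mdim : Fin n → ℕ}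
    (Av : ∀ i, Matrix (Fin (mdim i)) (Fin r) ℝ)
    (Fv : ∀ i, Matrix (Fin (mdim i)) (Fin q) ℝ)
    (Y : Fin n → Matrix (Fin r) (Fin q) ℝ) : ℝ :=
  ∑ i, frobSq (Av i * Y i - Fv i)

/-- Right-hand side of the `X_{li}`-equation in algorithm (RRR-alg). -/
noncomputable def RRRrhsX {n r q : ℕ} {pdim : Fin n → ℕ}
    (Bv : ∀ i, Matrix (Fin (pdim i)) (Fin q) ℝ)
    (L1 : Fin n → Matrix (Fin r) (Fin q) ℝ) (i : Fin n) :
    Matrix (Fin r) (Fin (pdim i)) ℝ :=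
  L1 i * (Bv i)ᵀ

/-- Right-hand side of the `Y_i`-equation in algorithm (RRR-alg). -/
noncomputable def RRRrhsY {n r q : ℕ} {mdim : Fin n → ℕ}
    (a : Matrix (Fin n) (Fin n) ℝ)
    (Av : ∀ i, Matrix (Fin (mdim i)) (Fin r) ℝ)
    (Fv : ∀ i, Matrix (Fin (mdim i)) (Fin q) ℝ)
    (Y L1 L2 : Fin n → Matrix (Fin r) (Fin q) ℝ) (i : Fin n) :
    Matrix (Fin r) (Fin q) ℝ :=
  -((Av i)ᵀ * (Av i * Y i - Fv i)) - ∑ j, a i j • (Y i - Y j)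
    - (n : ℝ)⁻¹ • L1 i - ∑ j, a i j • (L2 i - L2 j)

/-- Right-hand side of the `Z_i`-equation in algorithm (RRR-alg). -/
noncomputable def RRRrhsZ {n r q : ℕ}
    (a : Matrix (Fin n) (Fin n) ℝ)
    (L1 : Fin n → Matrix (Fin r) (Fin q) ℝ) (i : Fin n) :
    Matrix (Fin r) (Fin q) ℝ :=
  -∑ j, a i j • (L1 i - L1 j)

/-- Right-hand side of the `Λ¹_i`-equation in algorithm (RRR-alg), with the derivative
feedbacks replaced by the right-hand sides that determine them. -/
noncomputable def RRRrhsL1 {n r q : ℕ} {mdim pdim : Fin n → ℕ}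
    (a : Matrix (Fin n) (Fin n) ℝ)
    (Av : ∀ i, Matrix (Fin (mdim i)) (Fin r) ℝ)
    (Bv : ∀ i, Matrix (Fin (pdim i)) (Fin q) ℝ)
    (Fv : ∀ i, Matrix (Fin (mdim i)) (Fin q) ℝ)
    (Xl : ∀ i, Matrix (Fin r) (Fin (pdim i)) ℝ)
    (Y Z L1 L2 : Fin n → Matrix (Fin r) (Fin q) ℝ) (i : Fin n) :
    Matrix (Fin r) (Fin q) ℝ :=
  (n : ℝ)⁻¹ • (Y i + RRRrhsY a Av Fv Y L1 L2 i)
    - (Xl i + RRRrhsX Bv L1 i) * Bv i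
    + ∑ j, a i j • (Z i - Z j) - ∑ j, a i j • (L1 i - L1 j)

/-- Right-hand side of the `Λ²_i`-equation in algorithm (RRR-alg), with the derivative
feedbacks replaced by the right-hand sides that determine them. -/
noncomputable def RRRrhsL2 {n r q : ℕ} {mdim : Fin n → ℕ}
    (a : Matrix (Fin n) (Fin n) ℝ)
    (Av : ∀ i, Matrix (Fin (mdim i)) (Fin r) ℝ)
    (Fv : ∀ i, Matrix (Fin (mdim i)) (Fin q) ℝ)
    (Y L1 L2 : Fin n → Matrix (Fin r) (Fin q) ℝ) (i : Fin n) :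
    Matrix (Fin r) (Fin q) ℝ :=
  ∑ j, a i j • (Y i - Y j)
    + ∑ j, a i j • (RRRrhsY a Av Fv Y L1 L2 i - RRRrhsY a Av Fv Y L1 L2 j)

/-- Equilibrium of algorithm (RRR-alg): all right-hand sides vanish. -/
noncomputable def RRRequil {n r q : ℕ} {mdim pdim : Fin n → ℕ}
    (a : Matrix (Fin n) (Fin n) ℝ)
    (Av : ∀ i, Matrix (Fin (mdim i)) (Fin r) ℝ)
    (Bv : ∀ i, Matrix (Fin (pdim i)) (Fin q) ℝ)
    (Fv : ∀ i, Matrix (Fin (mdim i)) (Fin q) ℝ)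
    (Xl : ∀ i, Matrix (Fin r) (Fin (pdim i)) ℝ)
    (Y Z L1 L2 : Fin n → Matrix (Fin r) (Fin q) ℝ) : Prop :=
  ∀ i, RRRrhsX Bv L1 i = 0 ∧ RRRrhsY a Av Fv Y L1 L2 i = 0 ∧
    RRRrhsZ a L1 i = 0 ∧ RRRrhsL1 a Av Bv Fv Xl Y Z L1 L2 i = 0 ∧
    RRRrhsL2 a Av Fv Y L1 L2 i = 0

/-!
Summing the constraints of (RRR-opt) over the nodes kills the Laplacian terms, so every feasible
`Y` is the constant `Σ_j X_{lj} B_{vj}`; conversely, on a connected graph the Laplacian has the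
constants as kernel and the zero-sum families as range, so every `X_l` is feasible together with
that constant `Y` and a suitable `Z`. The objective is a convex quadratic in that constant, hence
`Y` is optimal iff the gradient `G = Σ_i A_{vi}ᵀ (A_{vi} Y_i - F_{vi})` is orthogonal to all
`Σ_j D_j B_{vj}`, i.e. `G B_{vj}ᵀ = 0` for every `j`. At an equilibrium `Λ¹` and `Y` are constant
(they lie in the Laplacian kernel), the `Λ¹`-equation is the constraint, and summing the
`Y`-equations gives `G = -Λ¹`, which is annihilated by every `B_{vj}ᵀ`. Conversely `Λ¹ = -G`
together with a `Λ²` solving `Σ_j a_{ij} (Λ²_i - Λ²_j) = G / n - A_{vi}ᵀ (A_{vi} Y_i - F_{vi})`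
is an equilibrium.
-/

open Finset

section Laplacian

variable {ι V : Type*} [Fintype ι] [AddCommGroup V] [Module ℝ V]

def laplacian (a : Matrix ι ι ℝ) : (ι → V) →ₗ[ℝ] ι → V where
  toFun y i := ∑ j, a i j • (y i - y j)
  map_add' y z := by
    funext i
    simp only [Pi.add_apply, ← sum_add_distrib, ← smul_add, add_sub_add_comm]
  map_smul' c y := by
    funext i
    simp only [Pi.smul_apply, ← smul_sub, smul_sum, smul_comm c, RingHom.id_apply]

theorem laplacian_apply (a : Matrix ι ι ℝ) (y : ι → V) (i : ι) :
    laplacian a y i = ∑ j, a i j • (y i - y j) :=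
  rfl

theorem laplacian_const (a : Matrix ι ι ℝ) (c : V) : laplacian a (fun _ => c) = 0 := by
  funext i
  simp [laplacian_apply]

theorem sum_laplacian {a : Matrix ι ι ℝ} (hsym : ∀ i j, a i j = a j i) (y : ι → V) :
    ∑ i, laplacian a y i = 0 := by
  simp only [laplacian_apply, smul_sub, sum_sub_distrib, sub_eq_zero]
  rw [sum_comm]
  simp only [hsym]

theorem laplacian_apply_apply {m p : Type*} (a : Matrix ι ι ℝ) (Y : ι → Matrix m p ℝ)
    (i : ι) (k : m) (l : p) : laplacian a Y i k l = laplacian a (fun j => Y j k l) i := by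
  simp [laplacian_apply, Matrix.sum_apply]

theorem two_mul_sum_mul_laplacian {a : Matrix ι ι ℝ} (hsym : ∀ i j, a i j = a j i)
    (y : ι → ℝ) : 2 * ∑ i, y i * laplacian a y i = ∑ i, ∑ j, a i j * (y i - y j) ^ 2 := by
  have hswap :
      ∑ i, ∑ j, a i j * (y j * (y j - y i)) = ∑ i, ∑ j, a i j * (y i * (y i - y j)) := by
    rw [sum_comm]; simp only [hsym]
  calc 2 * ∑ i, y i * laplacian a y i
      = ∑ i, ∑ j, a i j * (y i * (y i - y j)) + ∑ i, ∑ j, a i j * (y j * (y j - y i)) := by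
        rw [hswap, ← two_mul]
        simp only [laplacian_apply, smul_eq_mul, mul_sum]
        congr! 3; ring
    _ = ∑ i, ∑ j, a i j * (y i - y j) ^ 2 := by
        simp only [← sum_add_distrib]; congr! 2; ring

end Laplacian

namespace GraphConnected

variable {n : ℕ} {a : Matrix (Fin n) (Fin n) ℝ}

theorem eq_of_laplacian_eq_zero (hsym : ∀ i j, a i j = a j i) (hnonneg : ∀ i j, 0 ≤ a i j)
    (hconn : GraphConnected a) {y : Fin n → ℝ} (hy : laplacian a y = 0) (i j : Fin n) :
    y i = y j := by
  have hterm_nonneg : ∀ i j, 0 ≤ a i j * (y i - y j) ^ 2 :=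
    fun i j => mul_nonneg (hnonneg i j) (sq_nonneg _)
  have henergy : ∑ i, ∑ j, a i j * (y i - y j) ^ 2 = 0 := by
    simp [← two_mul_sum_mul_laplacian hsym, hy]
  have hedge : ∀ u v, 0 < a u v → y u = y v := by
    intro u v huv
    have h := (sum_eq_zero_iff_of_nonneg fun j _ => hterm_nonneg u j).1
      ((sum_eq_zero_iff_of_nonneg fun i _ => sum_nonneg fun j _ => hterm_nonneg i j).1
        henergy u (mem_univ u)) v (mem_univ v)
    simpa [huv.ne', sub_eq_zero] using h
  induction hconn i j with
  | refl => rfl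
  | tail _ huv ih => exact ih.trans (hedge _ _ huv.2)

theorem matrix_eq_of_laplacian_eq_zero {m p : Type*} (hsym : ∀ i j, a i j = a j i)
    (hnonneg : ∀ i j, 0 ≤ a i j) (hconn : GraphConnected a) {Y : Fin n → Matrix m p ℝ}
    (hY : laplacian a Y = 0) (i j : Fin n) : Y i = Y j := by
  ext k l
  refine hconn.eq_of_laplacian_eq_zero hsym hnonneg (y := fun i => Y i k l) ?_ i j
  funext i
  rw [← laplacian_apply_apply, hY]
  rfl

theorem range_laplacian (hn : 0 < n) (hsym : ∀ i j, a i j = a j i)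
    (hnonneg : ∀ i j, 0 ≤ a i j) (hconn : GraphConnected a) :
    LinearMap.range (laplacian a) =
      LinearMap.ker (∑ i, LinearMap.proj i : (Fin n → ℝ) →ₗ[ℝ] ℝ) := by
  set S : (Fin n → ℝ) →ₗ[ℝ] ℝ := ∑ i, LinearMap.proj i
  have hrange_le : LinearMap.range (laplacian a) ≤ LinearMap.ker S := by
    rintro _ ⟨y, rfl⟩
    simpa [S] using sum_laplacian hsym y
  have hker_le : LinearMap.ker (laplacian a) ≤ ℝ ∙ (fun _ => (1 : ℝ)) := by
    intro y hy
    rw [LinearMap.mem_ker] at hy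
    refine Submodule.mem_span_singleton.2 ⟨y ⟨0, hn⟩, funext fun i => ?_⟩
    simp [hconn.eq_of_laplacian_eq_zero hsym hnonneg hy i ⟨0, hn⟩]
  have hS_ne : LinearMap.ker S ≠ ⊤ := by
    intro h
    have : S (fun _ => 1) = 0 := LinearMap.mem_ker.1 (h ▸ Submodule.mem_top)
    simp [S] at this
    omega
  -- `dim (range L) = n - dim (ker L) ≥ n - 1 ≥ dim (ker S)`
  have h1 := Submodule.finrank_lt hS_ne
  have h2 := (Submodule.finrank_mono hker_le).trans
    (finrank_span_le_card ({fun _ => (1 : ℝ)} : Set (Fin n → ℝ)))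
  have h3 := LinearMap.finrank_range_add_finrank_ker (laplacian a : (Fin n → ℝ) →ₗ[ℝ] _)
  simp only [Set.toFinset_singleton, card_singleton, Module.finrank_fin_fun] at h1 h2 h3
  exact Submodule.eq_of_le_of_finrank_le hrange_le (by omega)

theorem exists_laplacian_eq {m p : Type*} (hn : 0 < n) (hsym : ∀ i j, a i j = a j i)
    (hnonneg : ∀ i j, 0 ≤ a i j) (hconn : GraphConnected a) {H : Fin n → Matrix m p ℝ}
    (hH : ∑ i, H i = 0) : ∃ Z, laplacian a Z = H := by
  have hentry : ∀ k l, ∃ z : Fin n → ℝ, laplacian a z = fun i => H i k l := by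
    intro k l
    rw [← LinearMap.mem_range, hconn.range_laplacian hn hsym hnonneg, LinearMap.mem_ker]
    simpa [Matrix.sum_apply] using congrFun (congrFun hH k) l
  choose z hz using hentry
  refine ⟨fun i => Matrix.of fun k l => z k l i, funext fun i => ?_⟩
  ext k l
  rw [laplacian_apply_apply]
  exact congrFun (hz k l) i

end GraphConnected

section Frobenius

variable {α β γ : Type*} [Fintype α] [Fintype β] [Fintype γ]

theorem frobSq_nonneg (M : Matrix α β ℝ) : 0 ≤ frobSq M := by
  simpa [frobSq] using (Matrix.posSemidef_conjTranspose_mul_self M).trace_nonneg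

theorem frobSq_eq_zero_iff {M : Matrix α β ℝ} : frobSq M = 0 ↔ M = 0 := by
  simpa [frobSq] using Matrix.trace_conjTranspose_mul_self_eq_zero_iff (A := M)

theorem frobInner_comm (M N : Matrix α β ℝ) : frobInner M N = frobInner N M := by
  rw [frobInner, ← Matrix.trace_transpose, Matrix.transpose_mul, Matrix.transpose_transpose,
    frobInner]

theorem frobSq_add_smul (M N : Matrix α β ℝ) (t : ℝ) :
    frobSq (M + t • N) = frobSq M + 2 * t * frobInner M N + t ^ 2 * frobSq N := by
  have h := frobInner_comm N M
  simp only [frobSq, frobInner] at h ⊢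
  simp only [Matrix.transpose_add, Matrix.transpose_smul, Matrix.add_mul, Matrix.mul_add,
    Matrix.smul_mul, Matrix.mul_smul, Matrix.trace_add, Matrix.trace_smul, h, smul_eq_mul]
  ring

theorem frobInner_sum_left {ι : Type*} (s : Finset ι) (M : ι → Matrix α β ℝ)
    (N : Matrix α β ℝ) : frobInner (∑ i ∈ s, M i) N = ∑ i ∈ s, frobInner (M i) N := by
  simp [frobInner, Matrix.transpose_sum, Matrix.sum_mul, Matrix.trace_sum]

theorem frobInner_sum_right {ι : Type*} (s : Finset ι) (M : Matrix α β ℝ)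
    (N : ι → Matrix α β ℝ) : frobInner M (∑ i ∈ s, N i) = ∑ i ∈ s, frobInner M (N i) := by
  simp [frobInner, Matrix.mul_sum, Matrix.trace_sum]

theorem frobInner_mul_left (M : Matrix α β ℝ) (A : Matrix α γ ℝ) (N : Matrix γ β ℝ) :
    frobInner M (A * N) = frobInner (Aᵀ * M) N := by
  rw [frobInner, frobInner, Matrix.transpose_mul, Matrix.transpose_transpose, Matrix.mul_assoc]

theorem frobInner_mul_right (M : Matrix α β ℝ) (N : Matrix α γ ℝ) (B : Matrix γ β ℝ) :
    frobInner M (N * B) = frobInner (M * Bᵀ) N := by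
  rw [frobInner, frobInner, Matrix.transpose_mul, Matrix.transpose_transpose, ← Matrix.mul_assoc,
    Matrix.trace_mul_cycle]

end Frobenius

theorem sum_const_inv_natCast_smul {n : ℕ} (hn : n ≠ 0) {V : Type*} [AddCommGroup V]
    [Module ℝ V] (x : V) : ∑ _i : Fin n, (n : ℝ)⁻¹ • x = x := by
  rw [sum_const, card_univ, Fintype.card_fin, ← Nat.cast_smul_eq_nsmul ℝ, smul_smul,
    mul_inv_cancel₀ (Nat.cast_ne_zero.2 hn), one_smul]

noncomputable def RRRgrad {n r q : ℕ} {mdim : Fin n → ℕ}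
    (Av : ∀ i, Matrix (Fin (mdim i)) (Fin r) ℝ)
    (Fv : ∀ i, Matrix (Fin (mdim i)) (Fin q) ℝ)
    (Y : Fin n → Matrix (Fin r) (Fin q) ℝ) : Matrix (Fin r) (Fin q) ℝ :=
  ∑ i, (Av i)ᵀ * (Av i * Y i - Fv i)

def RRRminimal {n r q : ℕ} {mdim pdim : Fin n → ℕ}
    (a : Matrix (Fin n) (Fin n) ℝ)
    (Av : ∀ i, Matrix (Fin (mdim i)) (Fin r) ℝ)
    (Bv : ∀ i, Matrix (Fin (pdim i)) (Fin q) ℝ)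
    (Fv : ∀ i, Matrix (Fin (mdim i)) (Fin q) ℝ)
    (Y : Fin n → Matrix (Fin r) (Fin q) ℝ) : Prop :=
  ∀ Xl' : ∀ i, Matrix (Fin r) (Fin (pdim i)) ℝ, ∀ Y' Z' : Fin n → Matrix (Fin r) (Fin q) ℝ,
    RRRfeas a Bv Xl' Y' Z' → RRRobj Av Fv Y ≤ RRRobj Av Fv Y'

section RRR

variable {n r q : ℕ} {mdim pdim : Fin n → ℕ} {a : Matrix (Fin n) (Fin n) ℝ}
  {Av : ∀ i, Matrix (Fin (mdim i)) (Fin r) ℝ} {Bv : ∀ i, Matrix (Fin (pdim i)) (Fin q) ℝ}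
  {Fv : ∀ i, Matrix (Fin (mdim i)) (Fin q) ℝ} {Xl : ∀ i, Matrix (Fin r) (Fin (pdim i)) ℝ}
  {Y Z L1 L2 : Fin n → Matrix (Fin r) (Fin q) ℝ}

theorem RRRobj_add_smul (Av : ∀ i, Matrix (Fin (mdim i)) (Fin r) ℝ)
    (Fv : ∀ i, Matrix (Fin (mdim i)) (Fin q) ℝ) (Y : Fin n → Matrix (Fin r) (Fin q) ℝ)
    (t : ℝ) (D : Matrix (Fin r) (Fin q) ℝ) :
    RRRobj Av Fv (fun i => Y i + t • D) = RRRobj Av Fv Y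
      + 2 * t * frobInner (RRRgrad Av Fv Y) D + t ^ 2 * ∑ i, frobSq (Av i * D) := by
  have h : ∀ i, Av i * (Y i + t • D) - Fv i = (Av i * Y i - Fv i) + t • (Av i * D) := by
    intro i
    rw [Matrix.mul_add, Matrix.mul_smul]
    abel
  simp only [RRRobj, RRRgrad, h, frobSq_add_smul, frobInner_mul_left, frobInner_sum_left,
    sum_add_distrib, mul_sum]

theorem RRRfeas_iff : RRRfeas a Bv Xl Y Z ↔
    (∀ i, (n : ℝ)⁻¹ • Y i - Xl i * Bv i + laplacian a Z i = 0) ∧ ∀ i j, Y i = Y j :=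
  Iff.rfl

theorem RRRrhsY_eq (i : Fin n) : RRRrhsY a Av Fv Y L1 L2 i =
    -((Av i)ᵀ * (Av i * Y i - Fv i)) - laplacian a Y i - (n : ℝ)⁻¹ • L1 i - laplacian a L2 i :=
  rfl

theorem RRRrhsZ_eq (i : Fin n) : RRRrhsZ a L1 i = -laplacian a L1 i :=
  rfl

theorem RRRrhsL1_eq (i : Fin n) : RRRrhsL1 a Av Bv Fv Xl Y Z L1 L2 i =
    (n : ℝ)⁻¹ • (Y i + RRRrhsY a Av Fv Y L1 L2 i) - (Xl i + RRRrhsX Bv L1 i) * Bv i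
      + laplacian a Z i - laplacian a L1 i :=
  rfl

theorem RRRrhsL2_eq (i : Fin n) : RRRrhsL2 a Av Fv Y L1 L2 i =
    laplacian a Y i + laplacian a (RRRrhsY a Av Fv Y L1 L2) i :=
  rfl

theorem RRRfeas.eq_sum_mul (hsym : ∀ i j, a i j = a j i) (h : RRRfeas a Bv Xl Y Z)
    (i : Fin n) : Y i = ∑ j, Xl j * Bv j := by
  obtain ⟨hcons, hY⟩ := RRRfeas_iff.1 h
  have hsum : ∑ j, ((n : ℝ)⁻¹ • Y j - Xl j * Bv j + laplacian a Z j) = 0 :=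
    sum_eq_zero fun j _ => hcons j
  rw [sum_add_distrib, sum_laplacian hsym, add_zero, sum_sub_distrib,
    sum_congr rfl fun j _ => by rw [hY j i], sum_const_inv_natCast_smul i.pos.ne'] at hsum
  exact sub_eq_zero.1 hsum

theorem exists_RRRfeas (hn : 0 < n) (hsym : ∀ i j, a i j = a j i) (hnonneg : ∀ i j, 0 ≤ a i j)
    (hconn : GraphConnected a) (Bv : ∀ i, Matrix (Fin (pdim i)) (Fin q) ℝ)
    (Xl : ∀ i, Matrix (Fin r) (Fin (pdim i)) ℝ) :
    ∃ Z, RRRfeas a Bv Xl (fun _ => ∑ j, Xl j * Bv j) Z := by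
  obtain ⟨Z, hZ⟩ := hconn.exists_laplacian_eq hn hsym hnonneg
    (H := fun i => Xl i * Bv i - (n : ℝ)⁻¹ • ∑ j, Xl j * Bv j)
    (by rw [sum_sub_distrib, sum_const_inv_natCast_smul hn.ne', sub_self])
  refine ⟨Z, RRRfeas_iff.2 ⟨fun i => ?_, fun _ _ => rfl⟩⟩
  simp only [hZ]
  abel

theorem RRRfeas.sum_mul_eq_add (hsym : ∀ i j, a i j = a j i) (h : RRRfeas a Bv Xl Y Z)
    (Xl' : ∀ i, Matrix (Fin r) (Fin (pdim i)) ℝ) (i : Fin n) :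
    ∑ j, Xl' j * Bv j = Y i + ∑ j, (Xl' j - Xl j) * Bv j := by
  rw [h.eq_sum_mul hsym i, ← sum_add_distrib]
  simp only [Matrix.sub_mul, add_sub_cancel]

theorem frobInner_sum_mul (G : Matrix (Fin r) (Fin q) ℝ)
    (D : ∀ j, Matrix (Fin r) (Fin (pdim j)) ℝ) :
    frobInner G (∑ j, D j * Bv j) = ∑ j, frobInner (G * (Bv j)ᵀ) (D j) := by
  simp only [frobInner_sum_right, frobInner_mul_right]

theorem RRRfeas.rrrMinimal_iff (hn : 0 < n) (hsym : ∀ i j, a i j = a j i)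
    (hnonneg : ∀ i j, 0 ≤ a i j) (hconn : GraphConnected a) (h : RRRfeas a Bv Xl Y Z) :
    RRRminimal a Av Bv Fv Y ↔ ∀ j, RRRgrad Av Fv Y * (Bv j)ᵀ = 0 := by
  constructor
  · intro hmin
    set G := RRRgrad Av Fv Y
    set W := ∑ j, G * (Bv j)ᵀ * Bv j
    set s := ∑ j, frobSq (G * (Bv j)ᵀ)
    set c := ∑ i, frobSq (Av i * W)
    -- moving `Xl` along `t • G Bᵀ` changes the objective by `2 t s + t² c`
    have hquad : ∀ t : ℝ, 0 ≤ c * (t * t) + 2 * s * t + 0 := by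
      intro t
      obtain ⟨Z', hZ'⟩ := exists_RRRfeas hn hsym hnonneg hconn Bv
        (fun j => Xl j + t • (G * (Bv j)ᵀ))
      have hle := hmin _ _ _ hZ'
      have hY' : (fun _ => ∑ j, (Xl j + t • (G * (Bv j)ᵀ)) * Bv j) = fun i => Y i + t • W := by
        funext i
        rw [h.sum_mul_eq_add hsym _ i]
        simp only [add_sub_cancel_left, Matrix.smul_mul, W, smul_sum]
      rw [hY', RRRobj_add_smul, frobInner_sum_mul] at hle
      change _ ≤ _ + 2 * t * s + t ^ 2 * c at hle
      nlinarith
    have hs : s = 0 := by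
      have := discrim_le_zero hquad
      rw [discrim] at this
      nlinarith
    intro j
    exact frobSq_eq_zero_iff.1 ((sum_eq_zero_iff_of_nonneg fun j _ => frobSq_nonneg _).1 hs j
      (mem_univ j))
  · intro hG Xl' Y' Z' h'
    have hY' : Y' = fun i => Y i + (1 : ℝ) • ∑ j, (Xl' j - Xl j) * Bv j := by
      funext i
      rw [h'.eq_sum_mul hsym i, h.sum_mul_eq_add hsym, one_smul]
    rw [hY', RRRobj_add_smul, frobInner_sum_mul]
    simp only [hG, frobInner, Matrix.transpose_zero, Matrix.zero_mul, Matrix.trace_zero,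
      sum_const_zero, mul_zero, add_zero, one_pow, one_mul]
    exact le_add_of_nonneg_right (sum_nonneg fun i _ => frobSq_nonneg _)

theorem RRRequil.rrrFeas_and_grad_mul_eq_zero (hsym : ∀ i j, a i j = a j i)
    (hnonneg : ∀ i j, 0 ≤ a i j) (hconn : GraphConnected a) (h : RRRequil a Av Bv Fv Xl Y Z L1 L2) :
    RRRfeas a Bv Xl Y Z ∧ ∀ j, RRRgrad Av Fv Y * (Bv j)ᵀ = 0 := by
  have hY0 : RRRrhsY a Av Fv Y L1 L2 = 0 := funext fun i => (h i).2.1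
  have hL1 : laplacian a L1 = 0 := funext fun i => neg_eq_zero.1 (h i).2.2.1
  have hLY : laplacian a Y = 0 := funext fun i => by
    simpa [RRRrhsL2_eq, hY0] using (h i).2.2.2.2
  refine ⟨RRRfeas_iff.2 ⟨fun i => ?_, hconn.matrix_eq_of_laplacian_eq_zero hsym hnonneg hLY⟩,
    fun j => ?_⟩
  · simpa [RRRrhsL1_eq, hY0, (h i).1, hL1] using (h i).2.2.2.1
  · have hsum : ∑ i, RRRrhsY a Av Fv Y L1 L2 i = 0 := by simp [hY0]
    simp only [RRRrhsY_eq, sum_sub_distrib, sum_neg_distrib, sum_laplacian hsym,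
      hconn.matrix_eq_of_laplacian_eq_zero hsym hnonneg hL1 _ j,
      sum_const_inv_natCast_smul j.pos.ne', sub_zero] at hsum
    have hG : RRRgrad Av Fv Y = -L1 j :=
      eq_neg_of_add_eq_zero_left (neg_eq_zero.1 (by rw [neg_add']; exact hsum))
    rw [hG, Matrix.neg_mul, neg_eq_zero]
    exact (h j).1

theorem RRRfeas.exists_RRRequil (hn : 0 < n) (hsym : ∀ i j, a i j = a j i)
    (hnonneg : ∀ i j, 0 ≤ a i j) (hconn : GraphConnected a) (hf : RRRfeas a Bv Xl Y Z)
    (hG : ∀ j, RRRgrad Av Fv Y * (Bv j)ᵀ = 0) : ∃ L1 L2, RRRequil a Av Bv Fv Xl Y Z L1 L2 := by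
  obtain ⟨hcons, hYc⟩ := RRRfeas_iff.1 hf
  obtain ⟨L2, hL2⟩ := hconn.exists_laplacian_eq hn hsym hnonneg
    (H := fun i => (n : ℝ)⁻¹ • RRRgrad Av Fv Y - (Av i)ᵀ * (Av i * Y i - Fv i))
    (by rw [sum_sub_distrib, sum_const_inv_natCast_smul hn.ne']; exact sub_self _)
  have hLY : laplacian a Y = 0 := by
    rw [show Y = fun _ => Y ⟨0, hn⟩ from funext fun i => hYc i _, laplacian_const]
  have hX : ∀ i, RRRrhsX Bv (fun _ => -RRRgrad Av Fv Y) i = 0 := fun i => by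
    rw [RRRrhsX, Matrix.neg_mul, hG i, neg_zero]
  have hY0 : RRRrhsY a Av Fv Y (fun _ => -RRRgrad Av Fv Y) L2 = 0 := funext fun i => by
    simp only [RRRrhsY_eq, hLY, hL2, Pi.zero_apply, smul_neg]
    abel
  refine ⟨fun _ => -RRRgrad Av Fv Y, L2, fun i => ⟨hX i, congrFun hY0 i, ?_, ?_, ?_⟩⟩
  · rw [RRRrhsZ_eq, laplacian_const, Pi.zero_apply, neg_zero]
  · rw [RRRrhsL1_eq, congrFun hY0 i, hX i, laplacian_const]
    simpa using hcons i
  · rw [RRRrhsL2_eq, hLY, hY0, map_zero, Pi.zero_apply, add_zero]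

end RRR

theorem stmt_8_general (n r q : ℕ) (hn : 0 < n) (mdim pdim : Fin n → ℕ)
    (a : Matrix (Fin n) (Fin n) ℝ)
    (hsym : ∀ i j, a i j = a j i) (hnonneg : ∀ i j, 0 ≤ a i j)
    (hconn : GraphConnected a)
    (Av : ∀ i, Matrix (Fin (mdim i)) (Fin r) ℝ)
    (Bv : ∀ i, Matrix (Fin (pdim i)) (Fin q) ℝ)
    (Fv : ∀ i, Matrix (Fin (mdim i)) (Fin q) ℝ)
    (Xl : ∀ i, Matrix (Fin r) (Fin (pdim i)) ℝ)
    (Y Z : Fin n → Matrix (Fin r) (Fin q) ℝ) :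
    (RRRfeas a Bv Xl Y Z ∧
        ∀ Xl' : ∀ i, Matrix (Fin r) (Fin (pdim i)) ℝ,
          ∀ Y' Z' : Fin n → Matrix (Fin r) (Fin q) ℝ,
            RRRfeas a Bv Xl' Y' Z' → RRRobj Av Fv Y ≤ RRRobj Av Fv Y') ↔
      (∃ L1 L2 : Fin n → Matrix (Fin r) (Fin q) ℝ,
        RRRequil a Av Bv Fv Xl Y Z L1 L2) := by
  constructor
  · rintro ⟨hf, hmin⟩
    exact hf.exists_RRRequil hn hsym hnonneg hconn
      ((hf.rrrMinimal_iff hn hsym hnonneg hconn).1 hmin)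
  · rintro ⟨L1, L2, h⟩
    obtain ⟨hf, hG⟩ := h.rrrFeas_and_grad_mul_eq_zero hsym hnonneg hconn
    exact ⟨hf, (hf.rrrMinimal_iff hn hsym hnonneg hconn).2 hG⟩

theorem stmt_8 (n r q : ℕ) (hn : 0 < n) (mdim pdim : Fin n → ℕ)
    (a : Matrix (Fin n) (Fin n) ℝ)
    (hsym : ∀ i j, a i j = a j i) (hnonneg : ∀ i j, 0 ≤ a i j)
    (hdiag : ∀ i, a i i = 0) (hconn : GraphConnected a)
    (Av : ∀ i, Matrix (Fin (mdim i)) (Fin r) ℝ)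
    (Bv : ∀ i, Matrix (Fin (pdim i)) (Fin q) ℝ)
    (Fv : ∀ i, Matrix (Fin (mdim i)) (Fin q) ℝ)
    (Xl : ∀ i, Matrix (Fin r) (Fin (pdim i)) ℝ)
    (Y Z : Fin n → Matrix (Fin r) (Fin q) ℝ) :
    (RRRfeas a Bv Xl Y Z ∧
        ∀ Xl' : ∀ i, Matrix (Fin r) (Fin (pdim i)) ℝ,
          ∀ Y' Z' : Fin n → Matrix (Fin r) (Fin q) ℝ,
            RRRfeas a Bv Xl' Y' Z' → RRRobj Av Fv Y ≤ RRRobj Av Fv Y') ↔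
      (∃ L1 L2 : Fin n → Matrix (Fin r) (Fin q) ℝ,
        RRRequil a Av Bv Fv Xl Y Z L1 L2) :=
  stmt_8_general n r q hn mdim pdim a hsym hnonneg hconn Av Bv Fv Xl Y Z
end

section
/- Suppose the weighted undirected graph a on n nodes is connected. In the CCR structure, X* ∈ ℝ^{r×p} is a least squares solution to AXB = F if and only if there exist Y_{vi}* ∈ ℝ^{r_i×q}, Z_i* ∈ ℝ^{r×q}, U_i* ∈ ℝ^{m×q}, W_i* ∈ ℝ^{m×q} (i = 1,…,n) such that ((X*,…,X*), Y*, Z*, U*, W*) (with X_i* = X* for every i) is an optimal solution of problem (CCR-opt), i.e., it is feasible and attains the minimum of the objective over the feasible set. -/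
open Matrix

/-- Feasibility for problem (CCR-opt). -/
def CCRfeas {n p : ℕ} {rdim qdim mdim : Fin n → ℕ}
    (a : Matrix (Fin n) (Fin n) ℝ)
    (Bl : ∀ i, Matrix (Fin p) (Fin (qdim i)) ℝ)
    (X : Fin n → Matrix ((i : Fin n) × Fin (rdim i)) (Fin p) ℝ)
    (Yv : ∀ i, Matrix (Fin (rdim i)) ((i' : Fin n) × Fin (qdim i')) ℝ)
    (Z : Fin n → Matrix ((i : Fin n) × Fin (rdim i)) ((i' : Fin n) × Fin (qdim i')) ℝ)
    (U W : Fin n → Matrix ((i : Fin n) × Fin (mdim i)) ((i' : Fin n) × Fin (qdim i')) ℝ) :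
    Prop :=
  (∀ i j, X i = X j) ∧
  (∀ i, U i = ∑ j, a i j • (W i - W j)) ∧
  (∀ i, embedRow i (Yv i) - X i * embedCol i (Bl i) - ∑ j, a i j • (Z i - Z j) = 0)

/-- Objective of problem (CCR-opt): `Σ_i ‖A_{li} Y_{vi} − [F_{vi}]_R − U_i‖_F²`. -/
noncomputable def CCRobj {n : ℕ} {rdim qdim mdim : Fin n → ℕ}
    (Al : ∀ i, Matrix ((i' : Fin n) × Fin (mdim i')) (Fin (rdim i)) ℝ)
    (Fv : ∀ i, Matrix (Fin (mdim i)) ((i' : Fin n) × Fin (qdim i')) ℝ)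
    (Yv : ∀ i, Matrix (Fin (rdim i)) ((i' : Fin n) × Fin (qdim i')) ℝ)
    (U : Fin n → Matrix ((i : Fin n) × Fin (mdim i)) ((i' : Fin n) × Fin (qdim i')) ℝ) : ℝ :=
  ∑ i, frobSq (Al i * Yv i - embedRow i (Fv i) - U i)

/-- Right-hand side of the `X_i`-equation in algorithm (CCR-alg). -/
noncomputable def CCRrhsX {n p : ℕ} {rdim qdim : Fin n → ℕ}
    (a : Matrix (Fin n) (Fin n) ℝ)
    (Bl : ∀ i, Matrix (Fin p) (Fin (qdim i)) ℝ)
    (X L1 : Fin n → Matrix ((i : Fin n) × Fin (rdim i)) (Fin p) ℝ)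
    (L3 : Fin n → Matrix ((i : Fin n) × Fin (rdim i)) ((i' : Fin n) × Fin (qdim i')) ℝ)
    (i : Fin n) : Matrix ((i : Fin n) × Fin (rdim i)) (Fin p) ℝ :=
  L3 i * (embedCol i (Bl i))ᵀ - ∑ j, a i j • (L1 i - L1 j) - ∑ j, a i j • (X i - X j)

/-- Right-hand side of the `Y_{vi}`-equation in algorithm (CCR-alg). -/
noncomputable def CCRrhsY {n : ℕ} {rdim qdim mdim : Fin n → ℕ}
    (Al : ∀ i, Matrix ((i' : Fin n) × Fin (mdim i')) (Fin (rdim i)) ℝ)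
    (Fv : ∀ i, Matrix (Fin (mdim i)) ((i' : Fin n) × Fin (qdim i')) ℝ)
    (Yv : ∀ i, Matrix (Fin (rdim i)) ((i' : Fin n) × Fin (qdim i')) ℝ)
    (U : Fin n → Matrix ((i : Fin n) × Fin (mdim i)) ((i' : Fin n) × Fin (qdim i')) ℝ)
    (L3 : Fin n → Matrix ((i : Fin n) × Fin (rdim i)) ((i' : Fin n) × Fin (qdim i')) ℝ)
    (i : Fin n) : Matrix (Fin (rdim i)) ((i' : Fin n) × Fin (qdim i')) ℝ :=
  -((Al i)ᵀ * (Al i * Yv i - embedRow i (Fv i) - U i)) - rowBlk (L3 i) i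

/-- Right-hand side of the `U_i`-equation in algorithm (CCR-alg). -/
noncomputable def CCRrhsU {n : ℕ} {rdim qdim mdim : Fin n → ℕ}
    (Al : ∀ i, Matrix ((i' : Fin n) × Fin (mdim i')) (Fin (rdim i)) ℝ)
    (Fv : ∀ i, Matrix (Fin (mdim i)) ((i' : Fin n) × Fin (qdim i')) ℝ)
    (Yv : ∀ i, Matrix (Fin (rdim i)) ((i' : Fin n) × Fin (qdim i')) ℝ)
    (U L2 : Fin n → Matrix ((i : Fin n) × Fin (mdim i)) ((i' : Fin n) × Fin (qdim i')) ℝ)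
    (i : Fin n) : Matrix ((i : Fin n) × Fin (mdim i)) ((i' : Fin n) × Fin (qdim i')) ℝ :=
  Al i * Yv i - embedRow i (Fv i) - U i - L2 i

/-- Right-hand side of the `W_i`-equation in algorithm (CCR-alg). -/
noncomputable def CCRrhsW {n : ℕ} {qdim mdim : Fin n → ℕ}
    (a : Matrix (Fin n) (Fin n) ℝ)
    (L2 : Fin n → Matrix ((i : Fin n) × Fin (mdim i)) ((i' : Fin n) × Fin (qdim i')) ℝ)
    (i : Fin n) : Matrix ((i : Fin n) × Fin (mdim i)) ((i' : Fin n) × Fin (qdim i')) ℝ :=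
  ∑ j, a i j • (L2 i - L2 j)

/-- Right-hand side of the `Z_i`-equation in algorithm (CCR-alg). -/
noncomputable def CCRrhsZ {n : ℕ} {rdim qdim : Fin n → ℕ}
    (a : Matrix (Fin n) (Fin n) ℝ)
    (L3 : Fin n → Matrix ((i : Fin n) × Fin (rdim i)) ((i' : Fin n) × Fin (qdim i')) ℝ)
    (i : Fin n) : Matrix ((i : Fin n) × Fin (rdim i)) ((i' : Fin n) × Fin (qdim i')) ℝ :=
  ∑ j, a i j • (L3 i - L3 j)

/-- Right-hand side of the `Λ¹_i`-equation in algorithm (CCR-alg). -/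
noncomputable def CCRrhsL1 {n p : ℕ} {rdim : Fin n → ℕ}
    (a : Matrix (Fin n) (Fin n) ℝ)
    (X : Fin n → Matrix ((i : Fin n) × Fin (rdim i)) (Fin p) ℝ)
    (i : Fin n) : Matrix ((i : Fin n) × Fin (rdim i)) (Fin p) ℝ :=
  ∑ j, a i j • (X i - X j)

/-- Right-hand side of the `Λ²_i`-equation in algorithm (CCR-alg), with the derivative
feedback replaced by the right-hand side that determines it. -/
noncomputable def CCRrhsL2 {n : ℕ} {rdim qdim mdim : Fin n → ℕ}
    (a : Matrix (Fin n) (Fin n) ℝ)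
    (Al : ∀ i, Matrix ((i' : Fin n) × Fin (mdim i')) (Fin (rdim i)) ℝ)
    (Fv : ∀ i, Matrix (Fin (mdim i)) ((i' : Fin n) × Fin (qdim i')) ℝ)
    (Yv : ∀ i, Matrix (Fin (rdim i)) ((i' : Fin n) × Fin (qdim i')) ℝ)
    (U W L2 : Fin n → Matrix ((i : Fin n) × Fin (mdim i)) ((i' : Fin n) × Fin (qdim i')) ℝ)
    (i : Fin n) : Matrix ((i : Fin n) × Fin (mdim i)) ((i' : Fin n) × Fin (qdim i')) ℝ :=
  U i + CCRrhsU Al Fv Yv U L2 i - ∑ j, a i j • (W i - W j) - ∑ j, a i j • (L2 i - L2 j)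

/-- Right-hand side of the `Λ³_i`-equation in algorithm (CCR-alg), with the derivative
feedback replaced by the right-hand side that determines it. -/
noncomputable def CCRrhsL3 {n p : ℕ} {rdim qdim mdim : Fin n → ℕ}
    (a : Matrix (Fin n) (Fin n) ℝ)
    (Al : ∀ i, Matrix ((i' : Fin n) × Fin (mdim i')) (Fin (rdim i)) ℝ)
    (Bl : ∀ i, Matrix (Fin p) (Fin (qdim i)) ℝ)
    (Fv : ∀ i, Matrix (Fin (mdim i)) ((i' : Fin n) × Fin (qdim i')) ℝ)
    (X : Fin n → Matrix ((i : Fin n) × Fin (rdim i)) (Fin p) ℝ)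
    (Yv : ∀ i, Matrix (Fin (rdim i)) ((i' : Fin n) × Fin (qdim i')) ℝ)
    (Z : Fin n → Matrix ((i : Fin n) × Fin (rdim i)) ((i' : Fin n) × Fin (qdim i')) ℝ)
    (U L2 : Fin n → Matrix ((i : Fin n) × Fin (mdim i)) ((i' : Fin n) × Fin (qdim i')) ℝ)
    (L3 : Fin n → Matrix ((i : Fin n) × Fin (rdim i)) ((i' : Fin n) × Fin (qdim i')) ℝ)
    (i : Fin n) : Matrix ((i : Fin n) × Fin (rdim i)) ((i' : Fin n) × Fin (qdim i')) ℝ :=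
  embedRow i (Yv i) + embedRow i (CCRrhsY Al Fv Yv U L3 i)
    - X i * embedCol i (Bl i) - ∑ j, a i j • (Z i - Z j) - ∑ j, a i j • (L3 i - L3 j)

/-- Equilibrium of algorithm (CCR-alg): all right-hand sides vanish. -/
noncomputable def CCRequil {n p : ℕ} {rdim qdim mdim : Fin n → ℕ}
    (a : Matrix (Fin n) (Fin n) ℝ)
    (Al : ∀ i, Matrix ((i' : Fin n) × Fin (mdim i')) (Fin (rdim i)) ℝ)
    (Bl : ∀ i, Matrix (Fin p) (Fin (qdim i)) ℝ)
    (Fv : ∀ i, Matrix (Fin (mdim i)) ((i' : Fin n) × Fin (qdim i')) ℝ)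
    (X : Fin n → Matrix ((i : Fin n) × Fin (rdim i)) (Fin p) ℝ)
    (Yv : ∀ i, Matrix (Fin (rdim i)) ((i' : Fin n) × Fin (qdim i')) ℝ)
    (Z : Fin n → Matrix ((i : Fin n) × Fin (rdim i)) ((i' : Fin n) × Fin (qdim i')) ℝ)
    (U W : Fin n → Matrix ((i : Fin n) × Fin (mdim i)) ((i' : Fin n) × Fin (qdim i')) ℝ)
    (L1 : Fin n → Matrix ((i : Fin n) × Fin (rdim i)) (Fin p) ℝ)
    (L2 : Fin n → Matrix ((i : Fin n) × Fin (mdim i)) ((i' : Fin n) × Fin (qdim i')) ℝ)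
    (L3 : Fin n → Matrix ((i : Fin n) × Fin (rdim i)) ((i' : Fin n) × Fin (qdim i')) ℝ) :
    Prop :=
  ∀ i, CCRrhsX a Bl X L1 L3 i = 0 ∧ CCRrhsY Al Fv Yv U L3 i = 0 ∧
    CCRrhsU Al Fv Yv U L2 i = 0 ∧ CCRrhsW a L2 i = 0 ∧ CCRrhsZ a L3 i = 0 ∧
    CCRrhsL1 a X i = 0 ∧ CCRrhsL2 a Al Fv Yv U W L2 i = 0 ∧
    CCRrhsL3 a Al Bl Fv X Yv Z U L2 L3 i = 0


/-!
For a feasible point of (CCR-opt) with common value `X`, summing the constraints over the nodes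
cancels the Laplacian terms `∑ j, a i j • (Z i - Z j)` (as `a` is symmetric), so the residuals
`Al i * Yv i - [Fv i]_R - U i` add up to `A X B - F`; by Cauchy–Schwarz the objective is at least
`‖A X B - F‖² / n`. Conversely, on a connected graph the Laplacian maps onto the vectors with zero
sum, so the auxiliary variables can be chosen to make every residual equal to `(A X B - F) / n`,
which attains the bound. The optimal value of (CCR-opt) at `X` is therefore `‖A X B - F‖² / n`.
-/

open Finset

section WeightedLaplacian

variable {ι : Type*} [Fintype ι] {a : Matrix ι ι ℝ}

theorem sum_sum_smul_sub_eq_zero {M : Type*} [AddCommGroup M] [Module ℝ M]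
    (hsym : ∀ i j, a i j = a j i) (Z : ι → M) :
    ∑ i, ∑ j, a i j • (Z i - Z j) = 0 := by
  simp only [smul_sub, sum_sub_distrib]
  rw [sub_eq_zero, sum_comm]
  exact sum_congr rfl fun i _ => sum_congr rfl fun j _ => by rw [hsym]

theorem sum_sum_mul_sub_sq (hsym : ∀ i j, a i j = a j i) (w : ι → ℝ) :
    ∑ i, ∑ j, a i j * (w i - w j) ^ 2 = 2 * ∑ i, w i * ∑ j, a i j * (w i - w j) := by
  have hsq := sum_sum_smul_sub_eq_zero hsym fun i => w i ^ 2
  simp only [smul_eq_mul] at hsq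
  calc ∑ i, ∑ j, a i j * (w i - w j) ^ 2
      = ∑ i, ∑ j, (2 * (w i * (a i j * (w i - w j))) - a i j * (w i ^ 2 - w j ^ 2)) :=
        sum_congr rfl fun i _ => sum_congr rfl fun j _ => by ring
    _ = 2 * ∑ i, w i * ∑ j, a i j * (w i - w j) := by
        simp only [sum_sub_distrib, hsq, sub_zero, mul_sum]

end WeightedLaplacian

section ConnectedLaplacian

variable {n : ℕ} {a : Matrix (Fin n) (Fin n) ℝ}

theorem eq_of_sum_mul_sub_eq_zero (hsym : ∀ i j, a i j = a j i) (hnonneg : ∀ i j, 0 ≤ a i j)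
    (hconn : GraphConnected a) {w : Fin n → ℝ} (hw : ∀ i, ∑ j, a i j * (w i - w j) = 0)
    (i j : Fin n) : w i = w j := by
  have henergy : ∑ i, ∑ j, a i j * (w i - w j) ^ 2 = 0 := by
    simp [sum_sum_mul_sub_sq hsym, hw]
  have hterm_nonneg : ∀ i j, 0 ≤ a i j * (w i - w j) ^ 2 :=
    fun i j => mul_nonneg (hnonneg i j) (sq_nonneg _)
  have hadj : ∀ u v, u ≠ v ∧ 0 < a u v → w u = w v := by
    rintro u v ⟨-, hpos⟩
    have hterm : a u v * (w u - w v) ^ 2 = 0 :=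
      (sum_eq_zero_iff_of_nonneg fun j _ => hterm_nonneg u j).mp
        ((sum_eq_zero_iff_of_nonneg fun i _ => sum_nonneg fun j _ => hterm_nonneg i j).mp
          henergy u (mem_univ u)) v (mem_univ v)
    simpa [hpos.ne', sub_eq_zero] using hterm
  induction hconn i j with
  | refl => rfl
  | tail _ huv ih => exact ih.trans (hadj _ _ huv)

def weightedLaplacian (a : Matrix (Fin n) (Fin n) ℝ) : (Fin n → ℝ) →ₗ[ℝ] Fin n → ℝ :=
  (Matrix.diagonal (fun i => ∑ j, a i j) - a).mulVecLin

theorem weightedLaplacian_apply (w : Fin n → ℝ) (i : Fin n) :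
    weightedLaplacian a w i = ∑ j, a i j * (w i - w j) := by
  simp [weightedLaplacian, Matrix.mulVec, dotProduct, Matrix.diagonal_apply, mul_sub,
    sum_mul]

-- The range of the Laplacian lies in the hyperplane `∑ i, v i = 0` and has codimension at most
-- one, since its kernel consists of the constant vectors.
theorem exists_sum_mul_sub_eq (hn : 0 < n) (hsym : ∀ i j, a i j = a j i)
    (hnonneg : ∀ i j, 0 ≤ a i j) (hconn : GraphConnected a) {v : Fin n → ℝ}
    (hv : ∑ i, v i = 0) : ∃ w : Fin n → ℝ, ∀ i, ∑ j, a i j * (w i - w j) = v i := by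
  set L := weightedLaplacian a
  set S : (Fin n → ℝ) →ₗ[ℝ] ℝ := ∑ i, LinearMap.proj i
  have hS_apply : ∀ w, S w = ∑ i, w i := fun w => by simp [S]
  have hS : Function.Surjective S := fun x => ⟨Pi.single ⟨0, hn⟩ x, by simp [hS_apply]⟩
  have hker_S : Module.finrank ℝ (LinearMap.ker S) = n - 1 := by
    have := LinearMap.finrank_range_add_finrank_ker S
    rw [LinearMap.range_eq_top.mpr hS, finrank_top, Module.finrank_self,
      Module.finrank_fin_fun] at this
    omega
  have hker_L : Module.finrank ℝ (LinearMap.ker L) ≤ 1 := by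
    have hconst : LinearMap.ker L ≤ ℝ ∙ fun _ => 1 := fun w hw =>
      Submodule.mem_span_singleton.mpr ⟨w ⟨0, hn⟩, funext fun i => by
        simpa using eq_of_sum_mul_sub_eq_zero hsym hnonneg hconn
          (fun i => by rw [← weightedLaplacian_apply, LinearMap.mem_ker.mp hw, Pi.zero_apply])
          ⟨0, hn⟩ i⟩
    simpa using (Submodule.finrank_mono hconst).trans (finrank_span_le_card {fun _ => (1 : ℝ)})
  have hrange : LinearMap.range L = LinearMap.ker S := by
    refine Submodule.eq_of_le_of_finrank_le ?_ ?_
    · rintro _ ⟨w, rfl⟩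
      simpa [L, hS_apply, weightedLaplacian_apply] using
        sum_sum_smul_sub_eq_zero hsym w
    · have := LinearMap.finrank_range_add_finrank_ker L
      rw [Module.finrank_fin_fun] at this
      omega
  obtain ⟨w, hw⟩ : v ∈ LinearMap.range L := by rwa [hrange, LinearMap.mem_ker, hS_apply]
  exact ⟨w, fun i => by rw [← weightedLaplacian_apply, hw]⟩

theorem exists_sum_smul_sub_eq {α β : Type*} (hn : 0 < n) (hsym : ∀ i j, a i j = a j i)
    (hnonneg : ∀ i j, 0 ≤ a i j) (hconn : GraphConnected a) {V : Fin n → Matrix α β ℝ}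
    (hV : ∑ i, V i = 0) : ∃ W : Fin n → Matrix α β ℝ, ∀ i, ∑ j, a i j • (W i - W j) = V i := by
  choose w hw using fun s t => exists_sum_mul_sub_eq hn hsym hnonneg hconn
    (v := fun i => V i s t) (by simpa [Matrix.sum_apply] using congr_fun₂ hV s t)
  exact ⟨fun i => Matrix.of fun s t => w s t i, fun i => by
    ext s t
    simpa [Matrix.sum_apply, mul_sub] using hw s t i⟩

end ConnectedLaplacian

section BlockMatrices

variable {n : ℕ} {d : Fin n → ℕ} {α β : Type*}

theorem blockCols_mul_blockRows [Fintype β] (A : ∀ i, Matrix α (Fin (d i)) ℝ)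
    (M : ∀ i, Matrix (Fin (d i)) β ℝ) :
    blockCols A * blockRows M = ∑ i, A i * M i := by
  ext s t
  simp [Matrix.mul_apply, Matrix.sum_apply, Fintype.sum_sigma, blockCols, blockRows]

theorem sum_embedRow (M : ∀ i, Matrix (Fin (d i)) β ℝ) :
    ∑ i, embedRow i (M i) = blockRows M := by
  ext ⟨j, k⟩ t
  rw [Matrix.sum_apply, sum_eq_single j (fun i _ hi => by simp [embedRow, Ne.symm hi])
    (by simp)]
  simp [embedRow, blockRows]

theorem sum_embedCol (M : ∀ i, Matrix α (Fin (d i)) ℝ) :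
    ∑ i, embedCol i (M i) = blockCols M := by
  ext s ⟨j, k⟩
  rw [Matrix.sum_apply, sum_eq_single j (fun i _ hi => by simp [embedCol, Ne.symm hi])
    (by simp)]
  simp [embedCol, blockCols]

theorem blockRows_rowBlk (Q : Matrix ((i : Fin n) × Fin (d i)) β ℝ) :
    blockRows (rowBlk Q) = Q :=
  rfl

end BlockMatrices

section FrobeniusNorm

variable {α β : Type*} [Fintype α] [Fintype β]

theorem frobSq_eq_sum (M : Matrix α β ℝ) : frobSq M = ∑ t, ∑ s, M s t ^ 2 := by
  simp [frobSq, Matrix.trace, Matrix.mul_apply, sq]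

theorem frobSq_smul (c : ℝ) (M : Matrix α β ℝ) : frobSq (c • M) = c ^ 2 * frobSq M := by
  simp only [frobSq_eq_sum, Matrix.smul_apply, smul_eq_mul, mul_pow, mul_sum]

theorem frobSq_sum_le {n : ℕ} (E : Fin n → Matrix α β ℝ) :
    frobSq (∑ i, E i) ≤ n * ∑ i, frobSq (E i) := by
  calc frobSq (∑ i, E i) = ∑ t, ∑ s, (∑ i, E i s t) ^ 2 := by
        simp only [frobSq_eq_sum, Matrix.sum_apply]
    _ ≤ ∑ t, ∑ s, n * ∑ i, E i s t ^ 2 := by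
        gcongr with t _ s _
        simpa using sq_sum_le_card_mul_sum_sq (s := univ) (f := fun i => E i s t)
    _ = n * ∑ i, frobSq (E i) := by
        simp only [frobSq_eq_sum, mul_sum]
        exact (sum_comm.trans (sum_congr rfl fun t _ => sum_comm)).symm

end FrobeniusNorm

section CCR

variable {n p : ℕ} {rdim qdim mdim : Fin n → ℕ} {a : Matrix (Fin n) (Fin n) ℝ}
  {Al : ∀ i, Matrix ((i' : Fin n) × Fin (mdim i')) (Fin (rdim i)) ℝ}
  {Bl : ∀ i, Matrix (Fin p) (Fin (qdim i)) ℝ}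
  {Fv : ∀ i, Matrix (Fin (mdim i)) ((i' : Fin n) × Fin (qdim i')) ℝ}

theorem sum_mul_sub_embedRow (Yv : ∀ i, Matrix (Fin (rdim i)) ((i' : Fin n) × Fin (qdim i')) ℝ) :
    ∑ i, (Al i * Yv i - embedRow i (Fv i)) = blockCols Al * blockRows Yv - blockRows Fv := by
  rw [sum_sub_distrib, blockCols_mul_blockRows, sum_embedRow]

namespace CCRfeas

variable {X : Fin n → Matrix ((i : Fin n) × Fin (rdim i)) (Fin p) ℝ}
  {Yv : ∀ i, Matrix (Fin (rdim i)) ((i' : Fin n) × Fin (qdim i')) ℝ}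
  {Z : Fin n → Matrix ((i : Fin n) × Fin (rdim i)) ((i' : Fin n) × Fin (qdim i')) ℝ}
  {U W : Fin n → Matrix ((i : Fin n) × Fin (mdim i)) ((i' : Fin n) × Fin (qdim i')) ℝ}

theorem blockRows_eq (hsym : ∀ i j, a i j = a j i) (h : CCRfeas a Bl X Yv Z U W) (i₀ : Fin n) :
    blockRows Yv = X i₀ * blockCols Bl := by
  obtain ⟨hX, -, hYZ⟩ := h
  calc blockRows Yv = ∑ i, embedRow i (Yv i) := (sum_embedRow Yv).symm
    _ = ∑ i, (X i₀ * embedCol i (Bl i) + ∑ j, a i j • (Z i - Z j)) := by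
        refine sum_congr rfl fun i _ => ?_
        rw [hX i₀ i, ← sub_eq_zero, ← sub_sub]
        exact hYZ i
    _ = X i₀ * blockCols Bl := by
        rw [sum_add_distrib, sum_sum_smul_sub_eq_zero hsym, add_zero, ← Matrix.mul_sum,
          sum_embedCol]

theorem sum_U_eq_zero (hsym : ∀ i j, a i j = a j i) (h : CCRfeas a Bl X Yv Z U W) :
    ∑ i, U i = 0 := by
  rw [sum_congr rfl fun i _ => h.2.1 i]
  exact sum_sum_smul_sub_eq_zero hsym W

theorem sum_residual (hsym : ∀ i j, a i j = a j i) (h : CCRfeas a Bl X Yv Z U W) (i₀ : Fin n) :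
    ∑ i, (Al i * Yv i - embedRow i (Fv i) - U i) =
      blockCols Al * X i₀ * blockCols Bl - blockRows Fv := by
  rw [sum_sub_distrib, sum_mul_sub_embedRow, h.blockRows_eq hsym i₀, h.sum_U_eq_zero hsym,
    sub_zero, Matrix.mul_assoc]

theorem frobSq_le_card_mul_CCRobj (hsym : ∀ i j, a i j = a j i) (h : CCRfeas a Bl X Yv Z U W)
    (i₀ : Fin n) :
    frobSq (blockCols Al * X i₀ * blockCols Bl - blockRows Fv) ≤ n * CCRobj Al Fv Yv U := by
  rw [← h.sum_residual hsym i₀]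
  exact frobSq_sum_le _

end CCRfeas

theorem exists_CCRfeas_card_mul_CCRobj_eq (hn : 0 < n) (hsym : ∀ i j, a i j = a j i)
    (hnonneg : ∀ i j, 0 ≤ a i j) (hconn : GraphConnected a)
    (X : Matrix ((i : Fin n) × Fin (rdim i)) (Fin p) ℝ) :
    ∃ Yv Z U W, CCRfeas a Bl (fun _ => X) Yv Z U W ∧
      n * CCRobj Al Fv Yv U = frobSq (blockCols Al * X * blockCols Bl - blockRows Fv) := by
  set G := blockCols Al * X * blockCols Bl - blockRows Fv
  set Yv := rowBlk (X * blockCols Bl)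
  have hn' : (n : ℝ) ≠ 0 := Nat.cast_ne_zero.mpr hn.ne'
  obtain ⟨Z, hZ⟩ := exists_sum_smul_sub_eq hn hsym hnonneg hconn
    (V := fun i => embedRow i (Yv i) - X * embedCol i (Bl i))
    (by rw [sum_sub_distrib, sum_embedRow, blockRows_rowBlk, ← Matrix.mul_sum, sum_embedCol,
      sub_self])
  obtain ⟨W, hW⟩ := exists_sum_smul_sub_eq hn hsym hnonneg hconn
    (V := fun i => Al i * Yv i - embedRow i (Fv i) - (n : ℝ)⁻¹ • G)
    (by
      rw [sum_sub_distrib, sum_mul_sub_embedRow, blockRows_rowBlk, sum_const, card_univ,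
        Fintype.card_fin, ← Nat.cast_smul_eq_nsmul ℝ, smul_smul, mul_inv_cancel₀ hn', one_smul,
        ← Matrix.mul_assoc]
      exact sub_self G)
  refine ⟨Yv, Z, _, W, ⟨fun _ _ => rfl, fun i => (hW i).symm, fun i => ?_⟩, ?_⟩
  · rw [hZ i]
    exact sub_self _
  · simp only [CCRobj, sub_sub_cancel, frobSq_smul, sum_const, card_univ, Fintype.card_fin,
      nsmul_eq_mul]
    field_simp

end CCR

theorem stmt_11_general (n p : ℕ) (hn : 0 < n) (rdim qdim mdim : Fin n → ℕ)
    (a : Matrix (Fin n) (Fin n) ℝ)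
    (hsym : ∀ i j, a i j = a j i) (hnonneg : ∀ i j, 0 ≤ a i j)
    (hconn : GraphConnected a)
    (Al : ∀ i, Matrix ((i' : Fin n) × Fin (mdim i')) (Fin (rdim i)) ℝ)
    (Bl : ∀ i, Matrix (Fin p) (Fin (qdim i)) ℝ)
    (Fv : ∀ i, Matrix (Fin (mdim i)) ((i' : Fin n) × Fin (qdim i')) ℝ)
    (Xs : Matrix ((i : Fin n) × Fin (rdim i)) (Fin p) ℝ) :
    (∀ X' : Matrix ((i : Fin n) × Fin (rdim i)) (Fin p) ℝ,
        frobSq (blockCols Al * Xs * blockCols Bl - blockRows Fv) ≤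
          frobSq (blockCols Al * X' * blockCols Bl - blockRows Fv)) ↔
      (∃ Yv : ∀ i, Matrix (Fin (rdim i)) ((i' : Fin n) × Fin (qdim i')) ℝ,
        ∃ Z : Fin n → Matrix ((i : Fin n) × Fin (rdim i)) ((i' : Fin n) × Fin (qdim i')) ℝ,
          ∃ U W : Fin n → Matrix ((i : Fin n) × Fin (mdim i)) ((i' : Fin n) × Fin (qdim i')) ℝ,
            CCRfeas a Bl (fun _ => Xs) Yv Z U W ∧
              ∀ X' : Fin n → Matrix ((i : Fin n) × Fin (rdim i)) (Fin p) ℝ,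
                ∀ Yv' : ∀ i, Matrix (Fin (rdim i)) ((i' : Fin n) × Fin (qdim i')) ℝ,
                  ∀ Z' : Fin n → Matrix ((i : Fin n) × Fin (rdim i)) ((i' : Fin n) × Fin (qdim i')) ℝ,
                    ∀ U' W' : Fin n → Matrix ((i : Fin n) × Fin (mdim i)) ((i' : Fin n) × Fin (qdim i')) ℝ,
                      CCRfeas a Bl X' Yv' Z' U' W' →
                        CCRobj Al Fv Yv U ≤ CCRobj Al Fv Yv' U') := by
  constructor
  · intro hmin
    obtain ⟨Yv, Z, U, W, hfeas, hval⟩ :=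
      exists_CCRfeas_card_mul_CCRobj_eq (Al := Al) (Fv := Fv) hn hsym hnonneg hconn Xs
    refine ⟨Yv, Z, U, W, hfeas, fun X' Yv' Z' U' W' hfeas' => ?_⟩
    refine le_of_mul_le_mul_left ?_ (Nat.cast_pos.mpr hn : (0 : ℝ) < n)
    calc n * CCRobj Al Fv Yv U = frobSq (blockCols Al * Xs * blockCols Bl - blockRows Fv) := hval
      _ ≤ frobSq (blockCols Al * X' ⟨0, hn⟩ * blockCols Bl - blockRows Fv) := hmin _
      _ ≤ n * CCRobj Al Fv Yv' U' := hfeas'.frobSq_le_card_mul_CCRobj hsym ⟨0, hn⟩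
  · rintro ⟨Yv, Z, U, W, hfeas, hopt⟩ X'
    obtain ⟨Yv', Z', U', W', hfeas', hval'⟩ :=
      exists_CCRfeas_card_mul_CCRobj_eq (Al := Al) (Fv := Fv) hn hsym hnonneg hconn X'
    calc frobSq (blockCols Al * Xs * blockCols Bl - blockRows Fv)
        ≤ n * CCRobj Al Fv Yv U := hfeas.frobSq_le_card_mul_CCRobj hsym ⟨0, hn⟩
      _ ≤ n * CCRobj Al Fv Yv' U' := by gcongr; exact hopt _ _ _ _ _ hfeas'
      _ = frobSq (blockCols Al * X' * blockCols Bl - blockRows Fv) := hval'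

theorem stmt_11 (n p : ℕ) (hn : 0 < n) (rdim qdim mdim : Fin n → ℕ)
    (a : Matrix (Fin n) (Fin n) ℝ)
    (hsym : ∀ i j, a i j = a j i) (hnonneg : ∀ i j, 0 ≤ a i j)
    (hdiag : ∀ i, a i i = 0) (hconn : GraphConnected a)
    (Al : ∀ i, Matrix ((i' : Fin n) × Fin (mdim i')) (Fin (rdim i)) ℝ)
    (Bl : ∀ i, Matrix (Fin p) (Fin (qdim i)) ℝ)
    (Fv : ∀ i, Matrix (Fin (mdim i)) ((i' : Fin n) × Fin (qdim i')) ℝ)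
    (Xs : Matrix ((i : Fin n) × Fin (rdim i)) (Fin p) ℝ) :
    (∀ X' : Matrix ((i : Fin n) × Fin (rdim i)) (Fin p) ℝ,
        frobSq (blockCols Al * Xs * blockCols Bl - blockRows Fv) ≤
          frobSq (blockCols Al * X' * blockCols Bl - blockRows Fv)) ↔
      (∃ Yv : ∀ i, Matrix (Fin (rdim i)) ((i' : Fin n) × Fin (qdim i')) ℝ,
        ∃ Z : Fin n → Matrix ((i : Fin n) × Fin (rdim i)) ((i' : Fin n) × Fin (qdim i')) ℝ,
          ∃ U W : Fin n → Matrix ((i : Fin n) × Fin (mdim i)) ((i' : Fin n) × Fin (qdim i')) ℝ,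
            CCRfeas a Bl (fun _ => Xs) Yv Z U W ∧
              ∀ X' : Fin n → Matrix ((i : Fin n) × Fin (rdim i)) (Fin p) ℝ,
                ∀ Yv' : ∀ i, Matrix (Fin (rdim i)) ((i' : Fin n) × Fin (qdim i')) ℝ,
                  ∀ Z' : Fin n → Matrix ((i : Fin n) × Fin (rdim i)) ((i' : Fin n) × Fin (qdim i')) ℝ,
                    ∀ U' W' : Fin n → Matrix ((i : Fin n) × Fin (mdim i)) ((i' : Fin n) × Fin (qdim i')) ℝ,
                      CCRfeas a Bl X' Yv' Z' U' W' →
                        CCRobj Al Fv Yv U ≤ CCRobj Al Fv Yv' U') :=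
  stmt_11_general n p hn rdim qdim mdim a hsym hnonneg hconn Al Bl Fv Xs
end
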